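/- Let (Σ, dom) be connected and let L₁, L₂ ⊆ ℝ with ℝ = L₁ ∪ L₂, where each L_i is a countable union of prime-closed sets. Then the family {L₁, L₂} is locally monitorable. -/

import Mathlib

/-!
Abstract setting for real Mazurkiewicz traces: `T` is the set ℝ of real
traces with the prefix partial order, `P : Set T` is the set 𝒫 of prime
traces, `cone p` is `pℝ = {t : p ≤ t}`.
-/

namespace MzTrace

variable {T : Type} [PartialOrder T]

/-- `cone p` models `pℝ`, the set of traces having `p` as a prefix. -/
def cone (p : T) : Set T := Set.Ici p

/-- A set of traces is prime-open (w.r.t. the set `P` of prime traces)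
if it is a union `⋃ {pℝ : p ∈ U}` for some `U ⊆ P`. -/
def PrimeOpen (P : Set T) (L : Set T) : Prop := ∃ U ⊆ P, L = ⋃ p ∈ U, cone p

/-- A set is prime-closed if its complement is prime-open. -/
def PrimeClosed (P : Set T) (L : Set T) : Prop := PrimeOpen P Lᶜ

/-- The prime closure of `L`: the intersection of all prime-closed supersets. -/
def primeClosure (P : Set T) (L : Set T) : Set T := ⋂₀ {K | PrimeClosed P K ∧ L ⊆ K}

/-- A set `C` of traces is coherent if it has a common upper bound (a trace
`t` with `C ⊆ pref(t)`). -/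
def Coherent (C : Set T) : Prop := BddAbove C

/-- `primePref P L` is `𝒫(L)`, the set of prime prefixes of elements of `L`. -/
def primePref (P : Set T) (L : Set T) : Set T := {p ∈ P | ∃ t ∈ L, p ≤ t}

/-- `L` is locally monitorable: for every prime `s` there is a prime `t`
with `{s,t}` coherent (i.e. `s ≤ tℝ`) and `tℝ ⊆ L` or `tℝ ⊆ Lᶜ`. -/
def LocallyMonitorable (P : Set T) (L : Set T) : Prop :=
  ∀ s ∈ P, ∃ t ∈ P, Coherent {s, t} ∧ (cone t ⊆ L ∨ cone t ⊆ Lᶜ)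

end MzTrace

namespace MzTrace

variable {T : Type} [PartialOrder T]

/-- A family `F` of subsets is locally monitorable (w.r.t. the primes `P`). -/
def FamilyLocallyMonitorable (P : Set T) (F : Set (Set T)) : Prop :=
  ∀ s ∈ P, ∃ t ∈ P, ∃ Li ∈ F, Coherent {s, t} ∧ cone t ⊆ Li

/-!
A Baire category argument. If no prime cone `tℝ` above `s` lies inside `L₁` or `L₂`, then
it lies inside none of the countably many prime-closed pieces `C` of `L₁` and `L₂`. A point of
`tℝ` outside `C` lies in a prime cone `qℝ` disjoint from `C`, and a common prime extension of
`t` and `q` gives a prime above `t` whose cone misses `C`. Avoiding the pieces one at a time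
yields an increasing chain of primes above `s`; an upper bound of the chain then lies in no
piece, hence outside `L₁ ∪ L₂ = ℝ`.
-/

section

variable {P : Set T}

theorem coherent_pair_of_le {s t : T} (h : s ≤ t) : Coherent ({s, t} : Set T) :=
  ⟨t, by simp [upperBounds, h]⟩

theorem PrimeClosed.exists_cone_disjoint
    (hconn : ∀ s ∈ P, ∀ t ∈ P, Coherent {s, t} → ∃ p ∈ P, s ≤ p ∧ t ≤ p)
    {D : Set T} (hD : PrimeClosed P D) {t : T} (ht : t ∈ P) (hnot : ¬ cone t ⊆ D) :
    ∃ p ∈ P, t ≤ p ∧ Disjoint (cone p) D := by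
  obtain ⟨U, hUP, hDc⟩ := hD
  obtain ⟨x, htx, hxD⟩ := Set.not_subset.1 hnot
  have hx : x ∈ ⋃ q ∈ U, cone q := hDc ▸ hxD
  obtain ⟨q, hqU, hqx⟩ := Set.mem_iUnion₂.1 hx
  have hcoh : Coherent ({t, q} : Set T) := ⟨x, by rintro y (rfl | rfl); exacts [htx, hqx]⟩
  obtain ⟨p, hp, htp, hqp⟩ := hconn t ht q (hUP hqU) hcoh
  refine ⟨p, hp, htp, Set.disjoint_left.2 fun y hpy => ?_⟩
  exact (hDc ▸ Set.mem_biUnion hqU (hqp.trans hpy) : y ∈ Dᶜ)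

theorem exists_cone_subset_of_cone_subset_iUnion_nat
    (hconn : ∀ s ∈ P, ∀ t ∈ P, Coherent {s, t} → ∃ p ∈ P, s ≤ p ∧ t ≤ p)
    (hchain : ∀ f : ℕ → T, Monotone f → (∀ n, f n ∈ P) → BddAbove (Set.range f))
    {D : ℕ → Set T} (hD : ∀ n, PrimeClosed P (D n)) {s : T} (hs : s ∈ P)
    (hcov : cone s ⊆ ⋃ n, D n) :
    ∃ t ∈ P, s ≤ t ∧ ∃ n, cone t ⊆ D n := by
  by_contra! hnot
  have step : ∀ (n : ℕ) (t : {x : T // x ∈ P ∧ s ≤ x}),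
      ∃ p : {x : T // x ∈ P ∧ s ≤ x}, t.1 ≤ p.1 ∧ Disjoint (cone p.1) (D n) := by
    intro n t
    obtain ⟨p, hp, htp, hdisj⟩ :=
      (hD n).exists_cone_disjoint hconn t.2.1 (hnot t.1 t.2.1 t.2.2 n)
    exact ⟨⟨p, hp, t.2.2.trans htp⟩, htp, hdisj⟩
  choose next hle_next hdisj_next using step
  let chain : ℕ → {x : T // x ∈ P ∧ s ≤ x} :=
    fun n => Nat.rec ⟨s, hs, le_rfl⟩ next n
  have hmono : Monotone fun n => (chain n).1 :=
    monotone_nat_of_le_succ fun n => hle_next n (chain n)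
  obtain ⟨b, hb⟩ := hchain _ hmono fun n => (chain n).2.1
  obtain ⟨n, hbn⟩ := Set.mem_iUnion.1 (hcov ((chain 0).2.2.trans (hb ⟨0, rfl⟩)))
  exact Set.disjoint_left.1 (hdisj_next n (chain n)) (hb ⟨n + 1, rfl⟩) hbn

theorem exists_cone_subset_of_cone_subset_iUnion {ι : Type*} [Countable ι]
    (hconn : ∀ s ∈ P, ∀ t ∈ P, Coherent {s, t} → ∃ p ∈ P, s ≤ p ∧ t ≤ p)
    (hchain : ∀ f : ℕ → T, Monotone f → (∀ n, f n ∈ P) → BddAbove (Set.range f))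
    {D : ι → Set T} (hD : ∀ i, PrimeClosed P (D i)) {s : T} (hs : s ∈ P)
    (hcov : cone s ⊆ ⋃ i, D i) :
    ∃ t ∈ P, s ≤ t ∧ ∃ i, cone t ⊆ D i := by
  have : Nonempty ι := by
    obtain ⟨i, -⟩ := Set.mem_iUnion.1 (hcov (le_refl s))
    exact ⟨i⟩
  obtain ⟨e, he⟩ := exists_surjective_nat ι
  obtain ⟨t, ht, hst, n, htn⟩ := exists_cone_subset_of_cone_subset_iUnion_nat hconn hchain
    (fun n => hD (e n)) hs (he.iUnion_comp D ▸ hcov)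
  exact ⟨t, ht, hst, e n, htn⟩

end

/-- Theorem thm:nix, case n = 2: let the distributed alphabet
be connected (key facts: coherent pairs of primes have common prime
extensions, and increasing chains of primes are bounded above in ℝ).
If `ℝ = L₁ ∪ L₂` and each `L_i` is a countable union of prime-closed sets,
then the family `{L₁, L₂}` is locally monitorable. -/
theorem family_locallyMonitorable_of_countable_unions (P : Set T) (L₁ L₂ : Set T)
    (hconn : ∀ s ∈ P, ∀ t ∈ P, Coherent {s, t} → ∃ p ∈ P, s ≤ p ∧ t ≤ p)
    (hchain : ∀ f : ℕ → T, Monotone f → (∀ n, f n ∈ P) → BddAbove (Set.range f))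
    (hcover : L₁ ∪ L₂ = Set.univ)
    (hσ1 : ∃ C : ℕ → Set T, (∀ n, PrimeClosed P (C n)) ∧ L₁ = ⋃ n, C n)
    (hσ2 : ∃ C : ℕ → Set T, (∀ n, PrimeClosed P (C n)) ∧ L₂ = ⋃ n, C n) :
    FamilyLocallyMonitorable P {L₁, L₂} := by
  obtain ⟨C₁, hC₁, rfl⟩ := hσ1
  obtain ⟨C₂, hC₂, rfl⟩ := hσ2
  intro s hs
  have hcov : cone s ⊆ ⋃ i, Sum.elim C₁ C₂ i := by
    rw [Set.iUnion_sum]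
    simp [hcover]
  obtain ⟨t, ht, hst, i, hti⟩ := exists_cone_subset_of_cone_subset_iUnion hconn hchain
    (Sum.rec hC₁ hC₂) hs hcov
  refine ⟨t, ht, ?_⟩
  rcases i with n | n
  · exact ⟨_, Or.inl rfl, coherent_pair_of_le hst, hti.trans (Set.subset_iUnion C₁ n)⟩
  · exact ⟨_, Or.inr rfl, coherent_pair_of_le hst, hti.trans (Set.subset_iUnion C₂ n)⟩

end MzTrace
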